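/- arXiv:2505.00554 — 7 statements merged into one kernel-verified Lean document; each statement's English description precedes it below -/
import Mathlib

section
/- Let f ∈ F[x] have degree at most 2^m − 1, with square part f_sq and non-square part f_no. Then the polynomial identity f(x) = ((1 + x^{2^{m−1}})/2)·f_sq(x) + ((1 − x^{2^{m−1}})/2)·f_no(w^{−1}·x) holds in F[x]. -/
open Polynomial

/-- For `f` of degree at most `2^m - 1`, with square part
`f_sq = f %ₘ (X^(2^(m-1)) - 1)` and non-square part
`f_no = (f %ₘ (X^(2^(m-1)) + 1)).comp (w·X)`, the generalized Lagrange interpolation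
identity `f(x) = ((1 + x^(2^(m-1)))/2)·f_sq(x) + ((1 - x^(2^(m-1)))/2)·f_no(w⁻¹·x)`
holds in `F[x]`. -/
theorem stmt_1 {F : Type*} [Field F] (m : ℕ) (hm : 1 ≤ m) (w : F)
    (hw : IsPrimitiveRoot w (2 ^ m)) (f : F[X]) (hf : f.natDegree ≤ 2 ^ m - 1)
    (fsq fno : F[X])
    (hfsq : fsq = f %ₘ (X ^ 2 ^ (m - 1) - 1))
    (hfno : fno = (f %ₘ (X ^ 2 ^ (m - 1) + 1)).comp (C w * X)) :
    f = C (2⁻¹ : F) * (1 + X ^ 2 ^ (m - 1)) * fsq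
      + C (2⁻¹ : F) * (1 - X ^ 2 ^ (m - 1)) * fno.comp (C w⁻¹ * X) := by
  have hw0 : w ≠ 0 := hw.ne_zero (by positivity)
  -- 2 ≠ 0 in F
  have hne1 : w ^ (2 ^ (m - 1)) ≠ 1 := by
    refine ((IsPrimitiveRoot.iff (by positivity)).mp hw).2 _ (by positivity) ?_
    exact Nat.pow_lt_pow_right one_lt_two (by omega)
  have hsq : (w ^ (2 ^ (m - 1))) ^ 2 = 1 := by
    rw [← pow_mul]
    have : 2 ^ (m - 1) * 2 = 2 ^ m := by
      rw [← pow_succ]; congr 1; omega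
    rw [this, hw.pow_eq_one]
  have hwm : w ^ (2 ^ (m - 1)) = -1 := by
    have hmul : (w ^ (2 ^ (m - 1)) - 1) * (w ^ (2 ^ (m - 1)) + 1) = 0 := by
      linear_combination hsq
    rcases mul_eq_zero.mp hmul with h | h
    · exact absurd (by linear_combination h) hne1
    · linear_combination h
  have h2F : (2 : F) ≠ 0 := by
    intro h
    exact hne1 (by rw [hwm]; linear_combination -h)
  -- the composed non-square part is just f %ₘ (X^(2^(m-1)) + 1)
  have hcomp : fno.comp (C w⁻¹ * X) = f %ₘ (X ^ 2 ^ (m - 1) + 1) := by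
    rw [hfno, comp_assoc]
    have : (C w * X).comp (C w⁻¹ * X) = (X : F[X]) := by
      simp [mul_comp, ← mul_assoc, ← C_mul, mul_inv_cancel₀ hw0]
    rw [this, comp_X]
  rw [hcomp, hfsq]
  -- rewrite degree bound and generalize n := 2^(m-1)
  have h2n : 2 ^ m = 2 * 2 ^ (m - 1) := by
    rw [← pow_succ']; congr 1; omega
  rw [h2n] at hf
  have hn1 : 1 ≤ 2 ^ (m - 1) := Nat.one_le_two_pow
  generalize hgen : 2 ^ (m - 1) = n at hf hn1 ⊢
  -- monicity and degrees
  have hm1 : (X ^ n - 1 : F[X]).Monic := by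
    simpa using monic_X_pow_sub_C (1 : F) (by omega)
  have hm2 : (X ^ n + 1 : F[X]).Monic := by
    have := monic_X_pow_sub_C (-1 : F) (show n ≠ 0 by omega)
    simpa [sub_neg_eq_add] using this
  have hd1 : (X ^ n - 1 : F[X]).natDegree = n := by
    simpa using natDegree_X_pow_sub_C (n := n) (r := (1 : F))
  have hd2 : (X ^ n + 1 : F[X]).natDegree = n := by
    have := natDegree_X_pow_sub_C (n := n) (r := (-1 : F))
    simpa [sub_neg_eq_add] using this
  set q1 := f /ₘ (X ^ n - 1) with hq1
  set q2 := f /ₘ (X ^ n + 1) with hq2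
  -- degree bounds
  have hdegq : ∀ q : F[X], q.natDegree ≤ f.natDegree - n → q.degree < (n : ℕ) := by
    intro q hq
    rcases eq_or_ne q 0 with rfl | h0
    · rw [degree_zero]; exact WithBot.bot_lt_coe n
    · rw [degree_eq_natDegree h0]
      exact_mod_cast lt_of_le_of_lt hq (by omega)
  have hq1deg : q1.degree < (n : ℕ) := by
    apply hdegq
    rw [hq1, natDegree_divByMonic f hm1, hd1]
  have hq2deg : q2.degree < (n : ℕ) := by
    apply hdegq
    rw [hq2, natDegree_divByMonic f hm2, hd2]
  have hr1deg : (f %ₘ (X ^ n - 1)).degree < (n : ℕ) := by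
    have := degree_modByMonic_lt f hm1
    rwa [degree_eq_natDegree hm1.ne_zero, hd1] at this
  have hr2deg : (f %ₘ (X ^ n + 1)).degree < (n : ℕ) := by
    have := degree_modByMonic_lt f hm2
    rwa [degree_eq_natDegree hm2.ne_zero, hd2] at this
  have e1 : f %ₘ (X ^ n - 1) + (X ^ n - 1) * q1 = f := modByMonic_add_div f (X ^ n - 1)
  have e2 : f %ₘ (X ^ n + 1) + (X ^ n + 1) * q2 = f := modByMonic_add_div f (X ^ n + 1)
  -- the two quotients agree
  have key : q1 = q2 := by
    by_contra hne
    have hd0 : q1 - q2 ≠ 0 := sub_ne_zero.mpr hne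
    have heq : (q1 - q2) * X ^ n
        = q1 + q2 + (f %ₘ (X ^ n + 1)) - (f %ₘ (X ^ n - 1)) := by
      linear_combination e1 - e2
    have hlhs : (n : WithBot ℕ) ≤ ((q1 - q2) * X ^ n).degree := by
      rw [degree_mul, degree_X_pow, degree_eq_natDegree hd0]
      exact le_add_of_nonneg_left (by exact_mod_cast Nat.zero_le _)
    have hrhs : (q1 + q2 + (f %ₘ (X ^ n + 1)) - (f %ₘ (X ^ n - 1))).degree < (n : ℕ) := by
      refine lt_of_le_of_lt (degree_sub_le _ _) (max_lt ?_ hr1deg)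
      exact lt_of_le_of_lt (degree_add_le _ _)
        (max_lt (lt_of_le_of_lt (degree_add_le _ _) (max_lt hq1deg hq2deg)) hr2deg)
    rw [heq] at hlhs
    exact absurd (lt_of_le_of_lt hlhs hrhs) (lt_irrefl _)
  have hC : (C (2⁻¹ : F) : F[X]) * 2 = 1 := by
    rw [show ((2 : F[X])) = C (2 : F) from (map_ofNat (C : F →+* F[X]) 2).symm,
      ← C_mul, inv_mul_cancel₀ h2F, C_1]
  have hr1 : f %ₘ (X ^ n - 1) = f - (X ^ n - 1) * q1 := by linear_combination e1
  have hr2 : f %ₘ (X ^ n + 1) = f - (X ^ n + 1) * q2 := by linear_combination e2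
  rw [hr1, hr2, ← key]
  linear_combination (-f) * hC
end

section
/- Let f ∈ F[x] have degree at most 2^m − 1. If g, h ∈ F[x] have degree at most 2^{m−1} − 1 and satisfy the polynomial identity f(x) = ((1 + x^{2^{m−1}})/2)·g(x) + ((1 − x^{2^{m−1}})/2)·h(w^{−1}·x), then g = f_sq and h = f_no, the square and non-square parts of f. -/
open Polynomial

/-- Uniqueness of the square/non-square decomposition: if `g, h` have
degree at most `2^(m-1) - 1` and
`f = ((1 + x^(2^(m-1)))/2)·g(x) + ((1 - x^(2^(m-1)))/2)·h(w⁻¹·x)`,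
then `g` is the square part of `f` and `h` is the non-square part of `f`. -/
theorem stmt_2 {F : Type*} [Field F] (m : ℕ) (hm : 1 ≤ m) (w : F)
    (hw : IsPrimitiveRoot w (2 ^ m)) (f : F[X]) (hf : f.natDegree ≤ 2 ^ m - 1)
    (g h : F[X])
    (hg : g.natDegree ≤ 2 ^ (m - 1) - 1) (hh : h.natDegree ≤ 2 ^ (m - 1) - 1)
    (hid : f = C (2⁻¹ : F) * (1 + X ^ 2 ^ (m - 1)) * g
      + C (2⁻¹ : F) * (1 - X ^ 2 ^ (m - 1)) * h.comp (C w⁻¹ * X)) :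
    g = f %ₘ (X ^ 2 ^ (m - 1) - 1) ∧
    h = (f %ₘ (X ^ 2 ^ (m - 1) + 1)).comp (C w * X) := by
  set n : ℕ := 2 ^ (m - 1) with hn
  have hnpos : 0 < n := Nat.pow_pos (by norm_num)
  have hw0 : w ≠ 0 := hw.ne_zero (Nat.pow_pos (by norm_num : 0 < 2)).ne'
  have hu2 : (w ^ n) ^ 2 = 1 := by
    rw [← pow_mul, hn, ← pow_succ, Nat.sub_add_cancel hm]
    exact hw.pow_eq_one
  have hune : w ^ n ≠ 1 := by
    apply hw.pow_ne_one_of_pos_of_lt hnpos.ne'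
    rw [hn]
    exact Nat.pow_lt_pow_right (by norm_num) (Nat.sub_lt hm (by norm_num))
  have huneg : w ^ n = -1 := by
    rcases sq_eq_one_iff.mp hu2 with h1 | h1
    · exact absurd h1 hune
    · exact h1
  have two_ne : (2 : F) ≠ 0 := by
    intro h20
    have : (-1 : F) = 1 := by linear_combination -h20
    rw [← this] at hune
    exact hune huneg
  set h' : F[X] := h.comp (C w⁻¹ * X) with hh'
  have hh'deg : h'.natDegree ≤ n - 1 := by
    have h1 : (C w⁻¹ * X : F[X]).natDegree ≤ 1 := by
      simpa using natDegree_C_mul_le w⁻¹ (X : F[X])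
    calc h'.natDegree = h.natDegree * (C w⁻¹ * X : F[X]).natDegree :=
          natDegree_comp
      _ ≤ h.natDegree * 1 := Nat.mul_le_mul_left _ h1
      _ ≤ n - 1 := by simpa using hh
  have degg : g.degree < (n : WithBot ℕ) := by
    refine lt_of_le_of_lt degree_le_natDegree ?_
    exact_mod_cast lt_of_le_of_lt hg (Nat.sub_lt hnpos one_pos)
  have degh' : h'.degree < (n : WithBot ℕ) := by
    refine lt_of_le_of_lt degree_le_natDegree ?_
    exact_mod_cast lt_of_le_of_lt hh'deg (Nat.sub_lt hnpos one_pos)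
  have hinv : (C (2⁻¹ : F) : F[X]) * 2 = 1 := by
    rw [← map_ofNat (C : F →+* F[X]) 2, ← C_mul, inv_mul_cancel₀ two_ne, C_1]
  have key1 : f %ₘ (X ^ n - 1) = g := by
    have hmonic : Monic (X ^ n - 1 : F[X]) := by
      simpa using monic_X_pow_sub_C (1 : F) hnpos.ne'
    have hdeg1 : (X ^ n - 1 : F[X]).degree = n := by
      simpa using degree_X_pow_sub_C hnpos (1 : F)
    refine (div_modByMonic_unique (C (2⁻¹ : F) * (g - h')) g hmonic ⟨?_, ?_⟩).2
    · rw [hid]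
      linear_combination (-g) * hinv
    · rw [hdeg1]; exact degg
  have key2 : f %ₘ (X ^ n + 1) = h' := by
    have hmonic : Monic (X ^ n + 1 : F[X]) := by
      have := monic_X_pow_sub_C (-1 : F) hnpos.ne'
      simpa [sub_neg_eq_add] using this
    have hdeg1 : (X ^ n + 1 : F[X]).degree = n := by
      have := degree_X_pow_sub_C hnpos (-1 : F)
      simpa [sub_neg_eq_add] using this
    refine (div_modByMonic_unique (C (2⁻¹ : F) * (g - h')) h' hmonic ⟨?_, ?_⟩).2
    · rw [hid]
      linear_combination (-h') * hinv
    · rw [hdeg1]; exact degh'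
  refine ⟨key1.symm, ?_⟩
  rw [key2, hh', comp_assoc]
  have : (C w⁻¹ * X : F[X]).comp (C w * X) = X := by
    rw [mul_comp, C_comp, X_comp, ← mul_assoc, ← C_mul, inv_mul_cancel₀ hw0, C_1,
      one_mul]
  rw [this, comp_X]
end

section
/- Let v ∈ F^{2^m}, let z ∈ F, and define v' ∈ F^{2^{m−1}} by v'_i = (1 − z)·v_{2i} + z·v_{2i+1} for i ∈ {0,...,2^{m−1}−1}. Then mlex[v'](x_2,...,x_m) = mlex[v](z, x_2,...,x_m) as polynomials in the variables x_2,...,x_m. -/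
/-- The multilinear extension of a vector `v` of length `2^k` (given as a function
`ℕ → F`, only the first `2^k` values being relevant): the unique multilinear polynomial
in `k` variables taking the value `v i` on the Boolean point given by the binary digits
of `i` (least significant bit corresponding to the first variable). -/
noncomputable def mlex {F : Type*} [CommRing F] (k : ℕ) (v : ℕ → F) :
    MvPolynomial (Fin k) F :=
  ∑ i ∈ Finset.range (2 ^ k), MvPolynomial.C (v i) *
    ∏ j : Fin k, if Nat.testBit i j then MvPolynomial.X j else 1 - MvPolynomial.X j

lemma sum_range_two_mul {M : Type*} [AddCommMonoid M] (n : ℕ) (f : ℕ → M) :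
    ∑ i ∈ Finset.range (2 * n), f i = ∑ i ∈ Finset.range n, (f (2 * i) + f (2 * i + 1)) := by
  induction n with
  | zero => simp
  | succ n ih =>
      rw [Nat.mul_succ, Finset.sum_range_succ, Finset.sum_range_succ, Finset.sum_range_succ, ← ih]
      abel

/-- If `v` has length `2^(m+1)` and `v' i = (1 - z)·v (2i) + z·v (2i+1)`
for `i < 2^m`, then `mlex[v'](x₂, …, x_{m+1}) = mlex[v](z, x₂, …, x_{m+1})`, where the
partial evaluation substitutes `z` for the first variable. -/
theorem stmt_3 {F : Type*} [Field F] (m : ℕ) (v v' : ℕ → F) (z : F)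
    (hv' : ∀ i < 2 ^ m, v' i = (1 - z) * v (2 * i) + z * v (2 * i + 1)) :
    mlex m v' =
      MvPolynomial.bind₁
        (Fin.cases (MvPolynomial.C z) (fun j => MvPolynomial.X j) :
          Fin (m + 1) → MvPolynomial (Fin m) F)
        (mlex (m + 1) v) := by
  set σ : Fin (m + 1) → MvPolynomial (Fin m) F :=
    Fin.cases (MvPolynomial.C z) (fun j => MvPolynomial.X j) with hσ
  rw [mlex, mlex, map_sum]
  rw [show (2 : ℕ) ^ (m + 1) = 2 * 2 ^ m by ring, sum_range_two_mul]
  refine Finset.sum_congr rfl fun i hi => ?_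
  rw [Finset.mem_range] at hi
  have hP : ∀ b : Bool, (MvPolynomial.bind₁ σ)
      (∏ j : Fin (m + 1), if Nat.testBit (2 * i + b.toNat) j then MvPolynomial.X j
        else 1 - MvPolynomial.X j) =
      (if b then MvPolynomial.C z else 1 - MvPolynomial.C z) *
      ∏ j : Fin m, if Nat.testBit i j then MvPolynomial.X j else 1 - MvPolynomial.X j := by
    intro b
    rw [Fin.prod_univ_succ, map_mul, map_prod]
    congr 1
    · cases b <;> simp [hσ, Nat.testBit, Nat.mul_add_mod]
    · refine Finset.prod_congr rfl fun j _ => ?_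
      have ht : Nat.testBit (2 * i + b.toNat) (j.succ : ℕ) = Nat.testBit i j := by
        show Nat.testBit _ ((j : ℕ) + 1) = _
        rw [Nat.testBit_succ]
        congr 1
        cases b <;> simp <;> omega
      rw [ht]
      split <;> simp [hσ]
  have h0 := hP false
  have h1 := hP true
  simp only [Bool.toNat_false, Nat.add_zero, Bool.toNat_true] at h0 h1
  rw [map_mul, map_mul, MvPolynomial.algHom_C, MvPolynomial.algHom_C, h0, h1, hv' i hi]
  simp only [if_true, Bool.false_eq_true, if_false, map_add, map_mul, map_sub, map_one,
    MvPolynomial.algebraMap_eq]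
  ring
end

section
/- Let v ∈ F^{2^m}, let f = unex[v] (interpolated over all 2^m-th roots of unity w^i), let z ∈ F, and define v' ∈ F^{2^{m−1}} by v'_i = (1 − z)·v_{2i} + z·v_{2i+1}. Then unex[v'] (interpolated over the 2^{m−1}-th roots of unity w^{2i}) equals (1 − z)·f_sq + z·f_no, where f_sq and f_no are the square and non-square parts of f. -/
open Polynomial

/-- Let `f = unex[v]` (the unique polynomial of degree at most
`2^m - 1` interpolating `v` over all `2^m`-th roots of unity `w^i`), let
`v' i = (1 - z)·v (2i) + z·v (2i+1)`, and let `g = unex[v']` (the unique polynomial of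
degree at most `2^(m-1) - 1` interpolating `v'` over the `2^(m-1)`-th roots of unity
`w^(2i)`). Then `g = (1 - z)·f_sq + z·f_no`, where `f_sq = f %ₘ (X^(2^(m-1)) - 1)` and
`f_no = (f %ₘ (X^(2^(m-1)) + 1)).comp (w·X)` are the square and non-square parts of `f`. -/
theorem stmt_4 {F : Type*} [Field F] (m : ℕ) (hm : 1 ≤ m) (w : F)
    (hw : IsPrimitiveRoot w (2 ^ m)) (v v' : ℕ → F) (z : F) (f g : F[X])
    (hfdeg : f.natDegree ≤ 2 ^ m - 1)
    (hf : ∀ i < 2 ^ m, f.eval (w ^ i) = v i)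
    (hv' : ∀ i < 2 ^ (m - 1), v' i = (1 - z) * v (2 * i) + z * v (2 * i + 1))
    (hgdeg : g.natDegree ≤ 2 ^ (m - 1) - 1)
    (hg : ∀ i < 2 ^ (m - 1), g.eval (w ^ (2 * i)) = v' i) :
    g = C (1 - z) * (f %ₘ (X ^ 2 ^ (m - 1) - 1))
      + C z * ((f %ₘ (X ^ 2 ^ (m - 1) + 1)).comp (C w * X)) := by
  set n := 2 ^ (m - 1) with hn
  have hn0 : 0 < n := Nat.pow_pos (by norm_num)
  have h2n : 2 ^ m = 2 * n := by
    rw [hn, ← pow_succ']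
    congr 1
    omega
  have hwn : w ^ n = -1 :=
    (hw.pow (Nat.pow_pos (by norm_num)) (by omega)).eq_neg_one_of_two_right
  -- monicity
  have hmon1 : (X ^ n - 1 : F[X]).Monic := by
    simpa using monic_X_pow_sub_C (1 : F) hn0.ne'
  have hmon2 : (X ^ n + 1 : F[X]).Monic := by
    have := monic_X_pow_sub_C (-1 : F) hn0.ne'
    simpa [sub_neg_eq_add] using this
  have evalmod : ∀ (q : F[X]), q.Monic → ∀ (x : F), q.eval x = 0 →
      (f %ₘ q).eval x = f.eval x := fun q hq x hx => by
    rw [modByMonic_eq_sub_mul_div f q, eval_sub, eval_mul, hx, zero_mul, sub_zero]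
  -- evaluation of the RHS at w^(2i)
  have key : ∀ i < n,
      (C (1 - z) * (f %ₘ (X ^ n - 1))
        + C z * ((f %ₘ (X ^ n + 1)).comp (C w * X))).eval (w ^ (2 * i)) = v' i := by
    intro i hi
    have h1 : (f %ₘ (X ^ n - 1)).eval (w ^ (2 * i)) = v (2 * i) := by
      have hx : (w ^ (2 * i)) ^ n = 1 := by
        rw [← pow_mul, show 2 * i * n = 2 ^ m * i by rw [h2n]; ring, pow_mul,
          hw.pow_eq_one, one_pow]
      rw [evalmod _ hmon1 _ (by rw [eval_sub, eval_pow, eval_X, eval_one, hx, sub_self]),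
        hf _ (by omega)]
    have h2 : ((f %ₘ (X ^ n + 1)).comp (C w * X)).eval (w ^ (2 * i)) = v (2 * i + 1) := by
      rw [eval_comp]
      have hx1 : (C w * X : F[X]).eval (w ^ (2 * i)) = w ^ (2 * i + 1) := by
        rw [eval_mul, eval_C, eval_X, ← pow_succ']
      rw [hx1]
      have hx : (w ^ (2 * i + 1)) ^ n = -1 := by
        rw [← pow_mul, show (2 * i + 1) * n = 2 ^ m * i + n by rw [h2n]; ring,
          pow_add, pow_mul, hw.pow_eq_one, one_pow, one_mul, hwn]
      rw [evalmod _ hmon2 _ (by rw [eval_add, eval_pow, eval_X, eval_one, hx, neg_add_cancel]),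
        hf _ (by omega)]
    rw [eval_add, eval_mul, eval_mul, eval_C, eval_C, h1, h2, hv' i hi]
  -- degree bound of the RHS
  have hq1ne : (X ^ n - 1 : F[X]) ≠ 1 := by
    intro h
    apply_fun natDegree at h
    rw [show (X ^ n - 1 : F[X]) = X ^ n - C 1 by simp, natDegree_X_pow_sub_C,
      natDegree_one] at h
    omega
  have hq2ne : (X ^ n + 1 : F[X]) ≠ 1 := by
    intro h
    apply_fun natDegree at h
    rw [show (X ^ n + 1 : F[X]) = X ^ n - C (-1) by simp [sub_neg_eq_add],
      natDegree_X_pow_sub_C, natDegree_one] at h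
    omega
  have hdeg1 : (f %ₘ (X ^ n - 1)).natDegree < n := by
    have := natDegree_modByMonic_lt f hmon1 hq1ne
    rwa [show (X ^ n - 1 : F[X]) = X ^ n - C 1 by simp, natDegree_X_pow_sub_C] at this
  have hdeg2 : ((f %ₘ (X ^ n + 1)).comp (C w * X)).natDegree < n := by
    have h1 : (f %ₘ (X ^ n + 1)).natDegree < n := by
      have hdq : (X ^ n + 1 : F[X]).natDegree = n := by
        rw [show (X ^ n + 1 : F[X]) = X ^ n - C (-1) by simp [sub_neg_eq_add],
          natDegree_X_pow_sub_C]
      have := natDegree_modByMonic_lt f hmon2 hq2ne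
      rwa [hdq] at this
    calc ((f %ₘ (X ^ n + 1)).comp (C w * X)).natDegree
        ≤ (f %ₘ (X ^ n + 1)).natDegree * (C w * X).natDegree := natDegree_comp_le
      _ ≤ (f %ₘ (X ^ n + 1)).natDegree * 1 := by
          gcongr
          exact (natDegree_C_mul_le _ _).trans (by simp)
      _ < n := by simpa using h1
  -- the difference is zero
  have hdiff : g - (C (1 - z) * (f %ₘ (X ^ n - 1))
      + C z * ((f %ₘ (X ^ n + 1)).comp (C w * X))) = 0 := by
    have hw2 : IsPrimitiveRoot (w ^ 2) n := hw.pow (Nat.pow_pos (by norm_num)) h2n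
    apply eq_zero_of_natDegree_lt_card_of_eval_eq_zero _
      (f := fun i : Fin n => w ^ (2 * (i : ℕ)))
      (fun i j hij => by
        have := hw2.pow_inj i.2 j.2 (by rw [← pow_mul, ← pow_mul]; exact hij)
        exact Fin.ext this)
    · intro i
      rw [eval_sub, key i i.2, hg i i.2, sub_self]
    · rw [Fintype.card_fin]
      calc (g - _).natDegree ≤ max g.natDegree _ := natDegree_sub_le _ _
        _ < n := by
            apply max_lt (by omega)
            calc (C (1 - z) * (f %ₘ (X ^ n - 1))
                  + C z * ((f %ₘ (X ^ n + 1)).comp (C w * X))).natDegree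
                ≤ max (C (1 - z) * (f %ₘ (X ^ n - 1))).natDegree
                    (C z * ((f %ₘ (X ^ n + 1)).comp (C w * X))).natDegree :=
                  natDegree_add_le _ _
              _ < n := by
                  apply max_lt
                  · exact lt_of_le_of_lt (natDegree_C_mul_le _ _) hdeg1
                  · exact lt_of_le_of_lt (natDegree_C_mul_le _ _) hdeg2
  linear_combination (norm := ring_nf) hdiff
end

section
/- Let g ∈ F[X_1,...,X_q] have total degree at most d with component polynomials g_0,...,g_d, and let f_1,...,f_q ∈ F[x]. Set P = g(f_1,...,f_q) ∈ F[x]. Then the even and odd parts of P satisfy P_ev(y) = Σ_{j=0}^{⌊d/2⌋} y^j·g_{2j}(f_{1,ev}(y), f_{1,od}(y), ..., f_{q,ev}(y), f_{q,od}(y)) and P_od(y) = Σ_{j=0}^{⌊(d−1)/2⌋} y^j·g_{2j+1}(f_{1,ev}(y), f_{1,od}(y), ..., f_{q,ev}(y), f_{q,od}(y)) as identities in F[y]. -/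
open Polynomial

/-- The even part of a polynomial: the polynomial whose coefficients are the
even-index coefficients of `p`, so that `p(x) = p_ev(x²) + x·p_od(x²)`. -/
noncomputable def evenPart {F : Type*} [Semiring F] (p : F[X]) : F[X] :=
  ∑ i ∈ Finset.range (p.natDegree + 1), C (p.coeff (2 * i)) * X ^ i

/-- The odd part of a polynomial: the polynomial whose coefficients are the
odd-index coefficients of `p`, so that `p(x) = p_ev(x²) + x·p_od(x²)`. -/
noncomputable def oddPart {F : Type*} [Semiring F] (p : F[X]) : F[X] :=
  ∑ i ∈ Finset.range (p.natDegree + 1), C (p.coeff (2 * i + 1)) * X ^ i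

lemma coeff_evenPart {F : Type*} [Semiring F] (p : F[X]) (n : ℕ) :
    (evenPart p).coeff n = p.coeff (2 * n) := by
  rw [evenPart, finset_sum_coeff]
  simp only [coeff_C_mul, coeff_X_pow, mul_ite, mul_one, mul_zero]
  rw [Finset.sum_ite_eq (Finset.range (p.natDegree + 1)) n (fun i => p.coeff (2 * i))]
  by_cases h : n ∈ Finset.range (p.natDegree + 1)
  · rw [if_pos h]
  · rw [if_neg h]
    rw [Finset.mem_range] at h
    exact (coeff_eq_zero_of_natDegree_lt (by omega)).symm

lemma coeff_oddPart {F : Type*} [Semiring F] (p : F[X]) (n : ℕ) :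
    (oddPart p).coeff n = p.coeff (2 * n + 1) := by
  rw [oddPart, finset_sum_coeff]
  simp only [coeff_C_mul, coeff_X_pow, mul_ite, mul_one, mul_zero]
  rw [Finset.sum_ite_eq (Finset.range (p.natDegree + 1)) n (fun i => p.coeff (2 * i + 1))]
  by_cases h : n ∈ Finset.range (p.natDegree + 1)
  · rw [if_pos h]
  · rw [if_neg h]
    rw [Finset.mem_range] at h
    exact (coeff_eq_zero_of_natDegree_lt (by omega)).symm

lemma coeff_combo_even {F : Type*} [CommSemiring F] (a b : F[X]) (n : ℕ) :
    (expand F 2 a + X * expand F 2 b).coeff (2 * n) = a.coeff n := by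
  rw [coeff_add, coeff_expand_mul' two_pos]
  rcases n with _ | m
  · simp
  · have h : 2 * (m + 1) = (2 * m + 1) + 1 := by omega
    rw [h, coeff_X_mul, coeff_expand two_pos]
    rw [if_neg (by omega), add_zero]

lemma coeff_combo_odd {F : Type*} [CommSemiring F] (a b : F[X]) (n : ℕ) :
    (expand F 2 a + X * expand F 2 b).coeff (2 * n + 1) = b.coeff n := by
  rw [coeff_add, coeff_X_mul, coeff_expand_mul' two_pos, coeff_expand two_pos,
    if_neg (by omega), zero_add]

lemma expand_decomp {F : Type*} [CommSemiring F] (p : F[X]) :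
    expand F 2 (evenPart p) + X * expand F 2 (oddPart p) = p := by
  ext n
  rcases Nat.even_or_odd n with ⟨m, hm⟩ | ⟨m, hm⟩
  · have hn : n = 2 * m := by omega
    rw [hn, coeff_combo_even, coeff_evenPart]
  · rw [hm, coeff_combo_odd, coeff_oddPart]

lemma parts_unique {F : Type*} [CommSemiring F] (p a b : F[X])
    (h : p = expand F 2 a + X * expand F 2 b) : evenPart p = a ∧ oddPart p = b := by
  constructor
  · ext n; rw [coeff_evenPart, h, coeff_combo_even]
  · ext n; rw [coeff_oddPart, h, coeff_combo_odd]

lemma sum_range_even_odd {M : Type*} [AddCommMonoid M] (d : ℕ) (f : ℕ → M) :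
    ∑ j ∈ Finset.range (d + 1), f j =
      (∑ k ∈ Finset.range (d / 2 + 1), f (2 * k)) +
        ∑ k ∈ Finset.range ((d + 1) / 2), f (2 * k + 1) := by
  induction d with
  | zero => simp
  | succ n ih =>
    rw [Finset.sum_range_succ, ih]
    rcases Nat.even_or_odd n with ⟨m, hm⟩ | ⟨m, hm⟩
    · have h1 : (n + 1) / 2 + 1 = n / 2 + 1 := by omega
      have h2 : (n + 2) / 2 = (n + 1) / 2 + 1 := by omega
      have hx : 2 * ((n + 1) / 2) + 1 = n + 1 := by omega
      rw [h1, h2]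
      conv_rhs => rw [Finset.sum_range_succ (fun k => f (2 * k + 1)) ((n + 1) / 2), hx]
      rw [add_assoc]
    · have h1 : (n + 1) / 2 + 1 = (n / 2 + 1) + 1 := by omega
      have h2 : (n + 2) / 2 = (n + 1) / 2 := by omega
      have hx : 2 * (n / 2 + 1) = n + 1 := by omega
      rw [h1, h2]
      conv_rhs => rw [Finset.sum_range_succ (fun k => f (2 * k)) (n / 2 + 1), hx]
      rw [add_right_comm]

/-- Let `g` have total degree at most `d` with component polynomials
`g₀, …, g_d` (satisfying `g(A + T·B) = Σ_j Tʲ·g_j(A, B)`), and let `P = g(f₁, …, f_q)`.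
Then `P_ev(y) = Σ_{j=0}^{⌊d/2⌋} yʲ·g_{2j}(f_{1,ev}(y), f_{1,od}(y), …)` and
`P_od(y) = Σ_{j=0}^{⌊(d-1)/2⌋} yʲ·g_{2j+1}(f_{1,ev}(y), f_{1,od}(y), …)`
(for `d = 0` the second sum is empty; note `Finset.range ((d+1)/2)` ranges exactly over
`0, …, ⌊(d-1)/2⌋`). -/
theorem stmt_7 {F : Type*} [Field F] (q d : ℕ) (hq : 1 ≤ q)
    (g : MvPolynomial (Fin q) F) (hg : g.totalDegree ≤ d)
    (gs : ℕ → MvPolynomial (Fin q ⊕ Fin q) F)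
    (hgs : MvPolynomial.aeval
        (fun i : Fin q =>
          (MvPolynomial.X (Option.some (Sum.inl i)) +
            MvPolynomial.X Option.none * MvPolynomial.X (Option.some (Sum.inr i)) :
            MvPolynomial (Option (Fin q ⊕ Fin q)) F)) g =
      ∑ j ∈ Finset.range (d + 1),
        MvPolynomial.X Option.none ^ j * MvPolynomial.rename Option.some (gs j))
    (f : Fin q → F[X]) :
    evenPart (MvPolynomial.aeval f g) =
      ∑ j ∈ Finset.range (d / 2 + 1),
        X ^ j * MvPolynomial.aeval
          (Sum.elim (fun i => evenPart (f i)) (fun i => oddPart (f i))) (gs (2 * j)) ∧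
    oddPart (MvPolynomial.aeval f g) =
      ∑ j ∈ Finset.range ((d + 1) / 2),
        X ^ j * MvPolynomial.aeval
          (Sum.elim (fun i => evenPart (f i)) (fun i => oddPart (f i))) (gs (2 * j + 1)) := by
  set e : Fin q ⊕ Fin q → F[X] :=
    Sum.elim (fun i => evenPart (f i)) (fun i => oddPart (f i)) with he
  -- the algebra map specializing T ↦ X, A_i ↦ expand (evenPart f_i), B_i ↦ expand (oddPart f_i)
  set φ : MvPolynomial (Option (Fin q ⊕ Fin q)) F →ₐ[F] F[X] :=
    MvPolynomial.aeval (fun o => Option.elim o X (fun s => expand F 2 (e s))) with hφ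
  have key := congrArg φ hgs
  -- left side
  have hL : φ (MvPolynomial.aeval
        (fun i : Fin q =>
          (MvPolynomial.X (Option.some (Sum.inl i)) +
            MvPolynomial.X Option.none * MvPolynomial.X (Option.some (Sum.inr i)) :
            MvPolynomial (Option (Fin q ⊕ Fin q)) F)) g) = MvPolynomial.aeval f g := by
    rw [MvPolynomial.comp_aeval_apply]
    have hfun : (fun i : Fin q => φ
        (MvPolynomial.X (Option.some (Sum.inl i)) +
          MvPolynomial.X Option.none * MvPolynomial.X (Option.some (Sum.inr i)))) = f := by
      funext i
      simp only [map_add, map_mul, hφ, MvPolynomial.aeval_X, Option.elim, he, Sum.elim_inl,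
        Sum.elim_inr]
      exact expand_decomp (f i)
    rw [hfun]
  -- right side, term by term
  have hR : ∀ j, φ (MvPolynomial.X Option.none ^ j * MvPolynomial.rename Option.some (gs j))
      = X ^ j * expand F 2 (MvPolynomial.aeval e (gs j)) := by
    intro j
    rw [map_mul, map_pow]
    congr 1
    · simp [hφ]
    · rw [hφ, MvPolynomial.aeval_rename]
      rw [show ((fun o => Option.elim o X (fun s => expand F 2 (e s))) ∘ Option.some)
          = fun s => expand F 2 (e s) from rfl]
      exact (MvPolynomial.comp_aeval_apply (f := e) (Polynomial.expand F 2) (gs j)).symm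
  rw [hL, map_sum] at key
  simp only [hR] at key
  rw [sum_range_even_odd d (fun j => X ^ j * expand F 2 (MvPolynomial.aeval e (gs j)))] at key
  have keven : ∀ k : ℕ, (X : F[X]) ^ (2 * k) * expand F 2 (MvPolynomial.aeval e (gs (2 * k)))
      = expand F 2 (X ^ k * MvPolynomial.aeval e (gs (2 * k))) := by
    intro k
    rw [map_mul, map_pow, expand_X, ← pow_mul]
  have kodd : ∀ k : ℕ, (X : F[X]) ^ (2 * k + 1) * expand F 2 (MvPolynomial.aeval e (gs (2 * k + 1)))
      = X * expand F 2 (X ^ k * MvPolynomial.aeval e (gs (2 * k + 1))) := by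
    intro k
    rw [map_mul, map_pow, expand_X, ← pow_mul, pow_succ, mul_comm (X ^ (2*k)) X, mul_assoc]
  simp only [keven, kodd] at key
  rw [← map_sum (Polynomial.expand F 2), ← Finset.mul_sum, ← map_sum (Polynomial.expand F 2)]
    at key
  exact parts_unique _ _ _ key
end

section
/- Let t_1,...,t_c be positive integers with t_1 + ... + t_c ≥ m, with b_1 = 1 and b_j = 2^{t_1+...+t_{j−1}} for j ≥ 2, and let f ∈ F[x] have degree at most 2^m − 1. Then for every integer i, f(w^i) = κ[f](w^i, w^{b_2·i}, ..., w^{b_c·i}). -/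
/-- The generalized inverse Kronecker substitution: given exponents `t : Fin c → ℕ` with
bases `b j = 2^(t 0 + … + t (j-1))`, `kappa c t f` is the `c`-variate polynomial
`κ[f](x₁, …, x_c) = Σ f[j₁ + b₂·j₂ + … + b_c·j_c]·x₁^{j₁}⋯x_c^{j_c}`, the sum over all
tuples `(j₁, …, j_c)` with `0 ≤ jᵢ ≤ 2^(t i) - 1`. -/
noncomputable def kappa {F : Type*} [CommRing F] (c : ℕ) (t : Fin c → ℕ)
    (f : Polynomial F) : MvPolynomial (Fin c) F :=
  ∑ j : (∀ i : Fin c, Fin (2 ^ t i)),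
    MvPolynomial.C (f.coeff (∑ i : Fin c, 2 ^ (∑ k ∈ Finset.Iio i, t k) * (j i : ℕ))) *
    ∏ i : Fin c, MvPolynomial.X i ^ (j i : ℕ)

/-- Auxiliary: a sum over `Finset.Iio i` in `Fin c` equals the sum over `Fin i`. -/
lemma sum_Iio_fin {c : ℕ} (t : Fin c → ℕ) (i : Fin c) :
    ∑ k ∈ Finset.Iio i, t k = ∑ k : Fin (i : ℕ), t (Fin.castLE i.isLt.le k) := by
  apply Finset.sum_bij' (i := fun (k : Fin c) (hk : k ∈ Finset.Iio i) =>
      (⟨(k : ℕ), (Finset.mem_Iio.mp hk : k < i)⟩ : Fin (i : ℕ)))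
    (j := fun k _ => Fin.castLE i.isLt.le k)
  all_goals
    first
    | (intros; exact Finset.mem_univ _)
    | (intro a ha;
       exact Finset.mem_Iio.mpr (show Fin.castLE i.isLt.le a < i from a.isLt))
    | (intro a ha; rfl)

/-- Let `t₁, …, t_c` be positive integers with `t₁ + … + t_c ≥ m`,
`b j = 2^(t₁ + … + t_{j-1})` (so `b₁ = 1`), and let `f` have degree at most `2^m - 1`.
Then for every integer `i`: `f(wⁱ) = κ[f](w^(b₁·i), w^(b₂·i), …, w^(b_c·i))`. -/
theorem stmt_16 {F : Type*} [Field F] (m c : ℕ) (hm : 1 ≤ m) (w : F)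
    (hw : IsPrimitiveRoot w (2 ^ m)) (t : Fin c → ℕ) (ht : ∀ j, 1 ≤ t j)
    (htm : m ≤ ∑ j, t j) (f : Polynomial F) (hf : f.natDegree ≤ 2 ^ m - 1) (i : ℤ) :
    f.eval (w ^ i) =
      MvPolynomial.eval
        (fun j : Fin c => w ^ ((2 ^ (∑ k ∈ Finset.Iio j, t k) : ℤ) * i))
        (kappa c t f) := by
  classical
  set T := ∑ j, t j with hT
  have hprod : ∏ i' : Fin c, (2:ℕ) ^ t i' = 2 ^ T := by
    rw [Finset.prod_pow_eq_pow_sum]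
  have hdeg : f.natDegree < 2 ^ T := by
    have h1 : (2:ℕ)^m ≤ 2^T := Nat.pow_le_pow_right (by norm_num) htm
    have h2 : 1 ≤ (2:ℕ)^m := Nat.one_le_two_pow
    omega
  set v := w ^ i with hv
  -- RHS simplification
  rw [kappa, map_sum]
  have key : ∀ j : (∀ i' : Fin c, Fin (2 ^ t i')),
      MvPolynomial.eval
        (fun j' : Fin c => w ^ ((2 ^ (∑ k ∈ Finset.Iio j', t k) : ℤ) * i))
        (MvPolynomial.C (f.coeff (∑ i' : Fin c, 2 ^ (∑ k ∈ Finset.Iio i', t k) * (j i' : ℕ))) *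
          ∏ i' : Fin c, MvPolynomial.X i' ^ (j i' : ℕ)) =
      f.coeff (∑ i' : Fin c, 2 ^ (∑ k ∈ Finset.Iio i', t k) * (j i' : ℕ)) *
        v ^ (∑ i' : Fin c, 2 ^ (∑ k ∈ Finset.Iio i', t k) * (j i' : ℕ)) := by
    intro j
    rw [map_mul, MvPolynomial.eval_C, MvPolynomial.eval_prod]
    congr 1
    rw [← Finset.prod_pow_eq_pow_sum]
    refine Finset.prod_congr rfl fun i' _ => ?_
    rw [map_pow, MvPolynomial.eval_X]
    have : w ^ ((2 ^ (∑ k ∈ Finset.Iio i', t k) : ℤ) * i) =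
        v ^ ((2:ℕ) ^ (∑ k ∈ Finset.Iio i', t k)) := by
      rw [mul_comm, zpow_mul, hv]
      norm_cast
    rw [this, ← pow_mul]
  simp_rw [key]
  -- LHS as sum over range 2^T
  rw [Polynomial.eval_eq_sum_range' hdeg,
    ← Fin.sum_univ_eq_sum_range (fun n => f.coeff n * v ^ n) (2 ^ T)]
  -- bijection via the mixed-radix equivalence
  refine (Fintype.sum_equiv ((finPiFinEquiv).trans (finCongr hprod))
    (fun j => f.coeff (∑ i' : Fin c, 2 ^ (∑ k ∈ Finset.Iio i', t k) * (j i' : ℕ)) *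
      v ^ (∑ i' : Fin c, 2 ^ (∑ k ∈ Finset.Iio i', t k) * (j i' : ℕ)))
    (fun n => f.coeff (n : ℕ) * v ^ (n : ℕ)) ?_).symm
  intro j
  have hval : (((finPiFinEquiv).trans (finCongr hprod) j : Fin (2 ^ T)) : ℕ) =
      ∑ i' : Fin c, 2 ^ (∑ k ∈ Finset.Iio i', t k) * (j i' : ℕ) := by
    simp only [Equiv.trans_apply, finCongr_apply, Fin.coe_cast]
    rw [finPiFinEquiv_apply]
    refine Finset.sum_congr rfl fun i' _ => ?_
    rw [sum_Iio_fin t i', mul_comm, Finset.prod_pow_eq_pow_sum]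
  rw [hval]
end

section
/- Let t_1,...,t_c be positive integers with t_1 + ... + t_c ≥ m, with b_1 = 1 and b_j = 2^{t_1+...+t_{j−1}} for j ≥ 2, let f ∈ F[x] have degree at most 2^m − 1, and let z_1,...,z_c ∈ F. Then there exist polynomials q_1,...,q_c ∈ F[x] such that f(x) = κ[f](z_1,...,z_c) + Σ_{j=1}^{c} q_j(x)·(x^{b_j} − z_j) holds as a polynomial identity in F[x]. -/
open Polynomial

lemma aux_sum (c : ℕ) (t : Fin c → ℕ) (i : Fin c) :
    ∑ k ∈ Finset.Iio i, t k = ∑ j : Fin i.val, t (Fin.castLE i.isLt.le j) := by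
  refine Finset.sum_bij' (fun k hk => (⟨k.val, Fin.lt_def.mp (Finset.mem_Iio.mp hk)⟩ : Fin i.val))
    (fun j _ => Fin.castLE i.isLt.le j) ?_ ?_ ?_ ?_ ?_
  · intro a ha; exact Finset.mem_univ _
  · intro j _; simpa [Finset.mem_Iio, Fin.lt_def] using j.isLt
  · intro a ha; rfl
  · intro j _; rfl
  · intro a ha; rfl


/-- Let `t₁, …, t_c` be positive integers with `t₁ + … + t_c ≥ m`,
`b j = 2^(t₁ + … + t_{j-1})` (so `b₁ = 1`), let `f` have degree at most `2^m - 1`, and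
let `z₁, …, z_c ∈ F`. Then there exist `q₁, …, q_c ∈ F[x]` with
`f(x) = κ[f](z₁, …, z_c) + Σ_{j=1}^{c} q_j(x)·(x^(b_j) - z_j)`. -/
theorem stmt_17 {F : Type*} [Field F] (m c : ℕ) (hm : 1 ≤ m) (t : Fin c → ℕ)
    (ht : ∀ j, 1 ≤ t j) (htm : m ≤ ∑ j, t j) (f : F[X])
    (hf : f.natDegree ≤ 2 ^ m - 1) (z : Fin c → F) :
    ∃ q : Fin c → F[X],
      f = C (MvPolynomial.eval z (kappa c t f)) +
        ∑ j : Fin c, q j * (X ^ 2 ^ (∑ k ∈ Finset.Iio j, t k) - C (z j)) := by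

  classical
  set b : Fin c → ℕ := fun i => 2 ^ (∑ k ∈ Finset.Iio i, t k) with hb
  set g : Fin c → F[X] := fun j => X ^ b j - C (z j) with hg
  set I := Ideal.span (Set.range g) with hI
  set N : (∀ i : Fin c, Fin (2 ^ t i)) → ℕ := fun j => ∑ i : Fin c, b i * (j i : ℕ) with hN
  -- the product of the radices
  have hprod : (∏ i : Fin c, 2 ^ t i) = 2 ^ (∑ j, t j) := by
    rw [Finset.prod_pow_eq_pow_sum]
  -- finPiFinEquiv computes N
  have hEquiv : ∀ j : (∀ i : Fin c, Fin (2 ^ t i)), ((finPiFinEquiv j : Fin _) : ℕ) = N j := by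
    intro j
    rw [finPiFinEquiv_apply, hN]
    refine Finset.sum_congr rfl fun i _ => ?_
    rw [mul_comm, hb]
    congr 1
    rw [Finset.prod_pow_eq_pow_sum]
    congr 1
    exact (aux_sum c t i).symm
  -- f as a sum over tuples
  have hdeg : f.natDegree < ∏ i : Fin c, 2 ^ t i := by
    rw [hprod]
    have h1 : (2:ℕ)^m ≤ 2 ^ (∑ j, t j) := Nat.pow_le_pow_right (by norm_num) htm
    have h2 : (1:ℕ) ≤ 2^m := Nat.one_le_two_pow
    omega
  have hfsum : f = ∑ j : (∀ i : Fin c, Fin (2 ^ t i)),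
      (monomial (N j)) (f.coeff (N j)) := by
    conv_lhs => rw [f.as_sum_range' _ hdeg]
    rw [← Fin.sum_univ_eq_sum_range (fun n => (monomial n) (f.coeff n))]
    rw [← Equiv.sum_comp finPiFinEquiv (fun k : Fin (∏ i : Fin c, 2 ^ t i) =>
      (monomial (k : ℕ)) (f.coeff (k : ℕ)))]
    refine Finset.sum_congr rfl fun j _ => ?_
    rw [hEquiv j]
  -- evaluation of kappa
  have heval : MvPolynomial.eval z (kappa c t f) =
      ∑ j : (∀ i : Fin c, Fin (2 ^ t i)), f.coeff (N j) * ∏ i : Fin c, z i ^ (j i : ℕ) := by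
    rw [kappa, map_sum]
    refine Finset.sum_congr rfl fun j _ => ?_
    rw [map_mul, MvPolynomial.eval_C, map_prod]
    simp [hN, hb]
  -- key ideal membership
  have key : f - C (MvPolynomial.eval z (kappa c t f)) ∈ I := by
    rw [← Ideal.Quotient.eq]
    have hXb : ∀ i : Fin c, (Ideal.Quotient.mk I) (X ^ b i : F[X]) =
        Ideal.Quotient.mk I (C (z i)) := by
      intro i
      rw [Ideal.Quotient.eq]
      exact Ideal.subset_span ⟨i, rfl⟩
    conv_lhs => rw [hfsum]
    rw [heval, map_sum, map_sum, map_sum]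
    refine Finset.sum_congr rfl fun j _ => ?_
    rw [← C_mul_X_pow_eq_monomial]
    have hXpow : (X : F[X]) ^ (N j) = ∏ i : Fin c, (X ^ b i) ^ (j i : ℕ) := by
      rw [hN]
      rw [← Finset.prod_pow_eq_pow_sum]
      exact Finset.prod_congr rfl fun i _ => (pow_mul X (b i) (j i : ℕ))
    have hC : (C (f.coeff (N j) * ∏ i : Fin c, z i ^ (j i : ℕ)) : F[X]) =
        C (f.coeff (N j)) * ∏ i : Fin c, C (z i) ^ (j i : ℕ) := by
      rw [map_mul, map_prod]
      exact congrArg _ (Finset.prod_congr rfl fun i _ => map_pow C (z i) _)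
    rw [hXpow, hC, map_mul, map_mul, map_prod, map_prod]
    congr 1
    refine Finset.prod_congr rfl fun i _ => ?_
    rw [map_pow (Ideal.Quotient.mk I) (X ^ b i), map_pow (Ideal.Quotient.mk I) (C (z i)), hXb]
  obtain ⟨q, hq⟩ := Ideal.mem_span_range_iff_exists_fun.mp key
  exact ⟨q, by rw [hq]; ring⟩
end
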